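/- Let N, n, m, q be natural numbers with n = m + q, q ≥ 1 and N > n. Let b ∈ ℝ^{q+1}, c ∈ ℝ^{m+1} and ŷ ∈ ℝ^N. If T_{N−n}(c) T_{N−q}(b) ŷ = 0, then T_{N−n}(b) (T_{N−m}(c) ŷ) = 0; that is, the prefiltered model-compliant output data ŷ' = T_{N−m}(c) ŷ are model-compliant with respect to the unknown factor b, so their dynamics are completely determined by the unknown poles. -/

import Mathlib

/-!
Multiplying by `T_k(a)` is convolution with `a`, so a product `T(c) T(b)` of banded
Toeplitz matrices of compatible sizes has `(i, j)` entry `∑_{k + l = j - i} c_k b_l`,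
which is symmetric in `b` and `c`. Hence `T_{N-n}(b) T_{N-m}(c) = T_{N-n}(c) T_{N-q}(b)`,
and the conclusion is the hypothesis read through this identity.
-/

open Matrix

/-- Banded Toeplitz matrix `T_k(a)` of a coefficient vector `a = (a_n, …, a_1, a_0)`:
entry `(i,j)` equals the coefficient `a_{n-(j-i)}` (vector component `j - i`, since
component `t` of the vector is the coefficient `a_{n-t}`) when `0 ≤ j - i ≤ n`, else `0`.
The number of columns is passed explicitly (intended: `N = k + n`). -/
def toep {R : Type*} [Semiring R] (k N n : ℕ) (a : Fin (n + 1) → R) :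
    Matrix (Fin k) (Fin N) R :=
  Matrix.of fun i j =>
    if h : i.val ≤ j.val ∧ j.val - i.val ≤ n then a ⟨j.val - i.val, by omega⟩ else 0

/-- Hankel matrix `H_q(y) ∈ R^{(N-q) × (q+1)}` with entries `(H_q(y))_{i,j} = y_{i+j}` (0-based). -/
def hank {R : Type*} [Semiring R] (N q : ℕ) (y : Fin N → R) :
    Matrix (Fin (N - q)) (Fin (q + 1)) R :=
  Matrix.of fun i j => y ⟨i.val + j.val, by have hi := i.isLt; have hj := j.isLt; omega⟩

/-- Convolution of coefficient vectors: `(c ⋆ b)_k = Σ_{i+j=k} c_i b_j`. -/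
def convVec {R : Type*} [Semiring R] (m q : ℕ) (c : Fin (m + 1) → R) (b : Fin (q + 1) → R) :
    Fin (m + q + 1) → R :=
  fun k => ∑ i : Fin (m + 1), ∑ j : Fin (q + 1), if i.val + j.val = k.val then c i * b j else 0

lemma toep_apply_eq_sum {R : Type*} [Semiring R] {K K' n : ℕ} (a : Fin (n + 1) → R)
    (i : Fin K) (j : Fin K') :
    toep K K' n a i j = ∑ k : Fin (n + 1), if i.val + k.val = j.val then a k else 0 := by
  unfold toep
  rw [of_apply]
  split_ifs with h
  · rw [Finset.sum_eq_single_of_mem ⟨j.val - i.val, by omega⟩ (Finset.mem_univ _)]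
    · rw [if_pos (by simp only; omega)]
    · intro k _ hk
      exact if_neg fun hc => hk (Fin.ext (by simp only; omega))
  · exact (Finset.sum_eq_zero fun k _ => if_neg (by omega)).symm

lemma toep_mul_apply {R α : Type*} [Semiring R] {K₁ K₂ m : ℕ} (hK : K₁ + m ≤ K₂)
    (c : Fin (m + 1) → R) (A : Matrix (Fin K₂) α R) (i : Fin K₁) (j : α) :
    (toep K₁ K₂ m c * A) i j = ∑ k : Fin (m + 1), c k * A ⟨i.val + k.val, by omega⟩ j := by
  simp only [mul_apply, toep_apply_eq_sum, Finset.sum_mul, ite_mul, zero_mul]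
  rw [Finset.sum_comm]
  refine Finset.sum_congr rfl fun k _ => ?_
  rw [Finset.sum_eq_single_of_mem ⟨i.val + k.val, by omega⟩ (Finset.mem_univ _)]
  · exact if_pos rfl
  · intro t _ ht
    exact if_neg fun hc => ht (Fin.ext hc.symm)

lemma toep_mul_toep_apply {R : Type*} [Semiring R] {K₁ K₂ N m q : ℕ} (hK : K₁ + m ≤ K₂)
    (c : Fin (m + 1) → R) (b : Fin (q + 1) → R) (i : Fin K₁) (j : Fin N) :
    (toep K₁ K₂ m c * toep K₂ N q b) i j
      = ∑ k : Fin (m + 1), ∑ l : Fin (q + 1),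
          if i.val + k.val + l.val = j.val then c k * b l else 0 := by
  simp only [toep_mul_apply hK, toep_apply_eq_sum, Finset.mul_sum, mul_ite, mul_zero]

lemma toep_mul_toep_comm {R : Type*} [CommSemiring R] {K K₁ K₂ N m q : ℕ}
    (h₁ : K + q ≤ K₁) (h₂ : K + m ≤ K₂) (b : Fin (q + 1) → R) (c : Fin (m + 1) → R) :
    toep K K₁ q b * toep K₁ N m c = toep K K₂ m c * toep K₂ N q b := by
  ext i j
  rw [toep_mul_toep_apply h₁, toep_mul_toep_apply h₂, Finset.sum_comm]
  refine Finset.sum_congr rfl fun k _ => Finset.sum_congr rfl fun l _ => ?_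
  rw [mul_comm, add_right_comm]

theorem stmt15_general (N m q : ℕ) (hN : m + q < N)
    (b : Fin (q + 1) → ℝ) (c : Fin (m + 1) → ℝ) (yhat : Fin N → ℝ)
    (h : toep (N - (m + q)) (N - q) m c *ᵥ (toep (N - q) N q b *ᵥ yhat) = 0) :
    toep (N - (m + q)) (N - m) q b *ᵥ (toep (N - m) N m c *ᵥ yhat) = 0 := by
  rw [mulVec_mulVec] at h ⊢
  rw [toep_mul_toep_comm (K₂ := N - q) (by omega) (by omega), h]

/-- If `T_{N-n}(c) T_{N-q}(b) ŷ = 0` then `T_{N-n}(b) (T_{N-m}(c) ŷ) = 0`: the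
prefiltered model-compliant output data `ŷ' = T_{N-m}(c) ŷ` are model-compliant with
respect to the unknown factor `b`. -/
theorem stmt15 (N m q : ℕ) (hq : 1 ≤ q) (hN : m + q < N)
    (b : Fin (q + 1) → ℝ) (c : Fin (m + 1) → ℝ) (yhat : Fin N → ℝ)
    (h : toep (N - (m + q)) (N - q) m c *ᵥ (toep (N - q) N q b *ᵥ yhat) = 0) :
    toep (N - (m + q)) (N - m) q b *ᵥ (toep (N - m) N m c *ᵥ yhat) = 0 :=
  stmt15_general N m q hN b c yhat h
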